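/- arXiv:1111.4177 — 3 statements merged into one kernel-verified Lean document; each statement's English description precedes it below -/
import Mathlib

section
/- The domain Ω = {(x,y,z) ∈ ℝ³ : z < x y²} admits no uniformly C² defining function: there do not exist a neighborhood U of ∂Ω, constants C₁, C₂ > 0, and a C² function ρ on U with Ω ∩ U = {ρ < 0}, |∇ρ| > C₁ on U, and ‖ρ‖_{C²(U)} < C₂. -/
/-!
A defining function `ρ` vanishes on `∂Ω = {z = x y²}`. At `p = (a, 0, 0)` the boundary contains
the line `t ↦ (t, 0, 0)` and the curve `t ↦ (a, t, a t²)`, whose tangent at `p` is `e_y`; hence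
`∂ₓρ(p) = ∂ᵧρ(p) = 0` and `|∇ρ(p)| = |∂_zρ(p)|`. Differentiating `ρ` twice along the curve gives
`∂ᵧ²ρ(p) + 2a ∂_zρ(p) = 0`, so `‖D²ρ(p)‖ ≥ 2|a| |∇ρ(p)| > 2|a| C₁`, which exceeds `C₂` once
`a = C₂ / C₁`: the curvature of `∂Ω` along the `x`-axis is unbounded.
-/

open Filter Topology

theorem eq_zero_of_mem_frontier_of_inter_eq {X : Type*} [TopologicalSpace X] {S U : Set X}
    {ρ : X → ℝ} (hU : IsOpen U) (hρ : ContinuousOn ρ U) (hS : S ∩ U = {p | ρ p < 0} ∩ U)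
    {p : X} (hp : p ∈ frontier S) (hpU : p ∈ U) : ρ p = 0 := by
  have hcont : ContinuousAt ρ p := hρ.continuousAt (hU.mem_nhds hpU)
  rcases lt_trichotomy (ρ p) 0 with hneg | hzero | hpos
  · refine absurd (mem_interior_iff_mem_nhds.2 ?_) hp.2
    filter_upwards [hU.mem_nhds hpU, hcont.eventually_lt continuousAt_const hneg] with q hqU hq
    exact (hS.symm ▸ ⟨hq, hqU⟩ : q ∈ S ∩ U).1
  · exact hzero
  · obtain ⟨q, hqS, hqU, hq⟩ := (mem_closure_iff_frequently.1 hp.1).and_eventually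
      (Filter.Eventually.and (hU.mem_nhds hpU) (continuousAt_const.eventually_lt hcont hpos))
      |>.exists
    exact absurd (hS ▸ ⟨hqS, hqU⟩ : q ∈ {p | ρ p < 0} ∩ U).1 hq.not_gt

theorem mem_frontier_setOf_lt_mul_sq {p : EuclideanSpace ℝ (Fin 3)} (hp : p 2 = p 0 * p 1 ^ 2) :
    p ∈ frontier {q : EuclideanSpace ℝ (Fin 3) | q 2 < q 0 * q 1 ^ 2} := by
  set S := {q : EuclideanSpace ℝ (Fin 3) | q 2 < q 0 * q 1 ^ 2}
  have hpS : p ∉ S := fun h => h.ne hp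
  refine ⟨?_, fun h => hpS (interior_subset h)⟩
  have hmaps : Set.MapsTo (fun t : ℝ => p - t • EuclideanSpace.single 2 1) (Set.Ioi 0) S := by
    intro t (ht : 0 < t)
    simpa [S, hp] using ht
  simpa using map_mem_closure (by fun_prop) (by simp : (0 : ℝ) ∈ closure (Set.Ioi 0)) hmaps

variable {E F : Type*} [NormedAddCommGroup E] [NormedSpace ℝ E] [NormedAddCommGroup F]
  [NormedSpace ℝ F]

theorem HasFDerivAt.apply_eq_zero_of_comp_eventuallyEq_zero {f : E → F} {f' : E →L[ℝ] F}
    {γ : ℝ → E} {v : E} {t : ℝ} (hf : HasFDerivAt f f' (γ t)) (hγ : HasDerivAt γ v t)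
    (h : (fun s => f (γ s)) =ᶠ[𝓝 t] 0) : f' v = 0 :=
  (hf.comp_hasDerivAt t hγ).unique ((hasDerivAt_const t 0).congr_of_eventuallyEq h)

theorem fderiv_fderiv_apply_add_fderiv_apply_eq_zero_of_comp_eventuallyEq_zero {f : E → F}
    {γ γ' : ℝ → E} {γ'' : E} {t : ℝ} (hf : ContDiffAt ℝ 2 f (γ t))
    (hγ : ∀ᶠ s in 𝓝 t, HasDerivAt γ (γ' s) s)
    (hγ' : HasDerivAt γ' γ'' t) (h : (fun s => f (γ s)) =ᶠ[𝓝 t] 0) :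
    fderiv ℝ (fderiv ℝ f) (γ t) (γ' t) (γ' t) + fderiv ℝ f (γ t) γ'' = 0 := by
  have hdiff : ∀ᶠ s in 𝓝 t, DifferentiableAt ℝ f (γ s) :=
    hγ.self_of_nhds.continuousAt.eventually
      ((hf.eventually (by simp)).mono fun y hy => hy.differentiableAt (by norm_num))
  have hfirst : (fun s => fderiv ℝ f (γ s) (γ' s)) =ᶠ[𝓝 t] 0 := by
    filter_upwards [hdiff, hγ, h.eventuallyEq_nhds] with s hfs hγs hs
    exact hfs.hasFDerivAt.apply_eq_zero_of_comp_eventuallyEq_zero hγs hs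
  have hD : HasFDerivAt (fderiv ℝ f) (fderiv ℝ (fderiv ℝ f) (γ t)) (γ t) :=
    ((hf.fderiv_right (m := 1) (by norm_num)).differentiableAt (by norm_num)).hasFDerivAt
  exact ((hD.comp_hasDerivAt t hγ.self_of_nhds).clm_apply hγ').unique
    ((hasDerivAt_const t 0).congr_of_eventuallyEq hfirst)

theorem norm_fderiv_fderiv_apply_le (f : E → F) (x v w : E) :
    ‖fderiv ℝ (fderiv ℝ f) x v w‖ ≤ ‖iteratedFDeriv ℝ 2 f x‖ * ‖v‖ * ‖w‖ := by
  rw [← norm_iteratedFDeriv_fderiv, norm_iteratedFDeriv_one]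
  exact (fderiv ℝ (fderiv ℝ f) x).le_opNorm₂ v w

theorem gradient_apply_eq_fderiv_single {ι : Type*} [Fintype ι] [DecidableEq ι]
    (f : EuclideanSpace ℝ ι → ℝ) (x : EuclideanSpace ℝ ι) (i : ι) :
    gradient f x i = fderiv ℝ f x (EuclideanSpace.single i 1) := by
  rw [gradient, ← InnerProductSpace.toDual_symm_apply, EuclideanSpace.inner_single_right]
  simp

theorem two_mul_abs_mul_norm_gradient_le_of_eq_zero_on_graph
    {ρ : EuclideanSpace ℝ (Fin 3) → ℝ} (a : ℝ)
    (hρ : ContDiffAt ℝ 2 ρ (a • EuclideanSpace.single 0 1))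
    (hzero : ∀ p : EuclideanSpace ℝ (Fin 3), p 2 = p 0 * p 1 ^ 2 → ρ p = 0) :
    2 * |a| * ‖gradient ρ (a • EuclideanSpace.single 0 1)‖ ≤
      ‖iteratedFDeriv ℝ 2 ρ (a • EuclideanSpace.single 0 1)‖ := by
  set e : Fin 3 → EuclideanSpace ℝ (Fin 3) := fun i => EuclideanSpace.single i 1
  set p := a • e 0
  set D := fderiv ℝ ρ p
  have hD : HasFDerivAt ρ D p := (hρ.differentiableAt (by norm_num)).hasFDerivAt
  set γ : ℝ → EuclideanSpace ℝ (Fin 3) := fun t => a • e 0 + t • e 1 + (a * t ^ 2) • e 2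
  set γ' : ℝ → EuclideanSpace ℝ (Fin 3) := fun t => e 1 + (2 * a * t) • e 2
  have hγ : ∀ t, HasDerivAt γ (γ' t) t := by
    intro t
    refine (((hasDerivAt_const t (a • e 0)).add ((hasDerivAt_id t).smul_const (e 1))).add
      (((hasDerivAt_pow 2 t).const_mul a).smul_const (e 2))).congr_deriv ?_
    simp only [γ']
    module
  have hγ' : HasDerivAt γ' ((2 * a) • e 2) 0 := by
    simpa [γ'] using ((hasDerivAt_id (0 : ℝ)).const_mul (2 * a)).smul_const (e 2)
  have hγ_zero : (fun t => ρ (γ t)) =ᶠ[𝓝 0] 0 :=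
    Eventually.of_forall fun t => hzero _ (by simp [γ, e])
  have hline_zero : (fun t : ℝ => ρ (t • e 0)) =ᶠ[𝓝 a] 0 :=
    Eventually.of_forall fun t => hzero _ (by simp [e])
  have hγ0 : γ 0 = p := by simp [γ, p]
  have hD0 : D (e 0) = 0 := by
    simpa using hD.apply_eq_zero_of_comp_eventuallyEq_zero
      ((hasDerivAt_id a).smul_const (e 0)) hline_zero
  have hD1 : D (e 1) = 0 := by
    have hDγ : HasFDerivAt ρ D (γ 0) := hγ0 ▸ hD
    simpa [γ'] using hDγ.apply_eq_zero_of_comp_eventuallyEq_zero (hγ 0) hγ_zero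
  have hD2 : fderiv ℝ (fderiv ℝ ρ) p (e 1) (e 1) = -(2 * a * D (e 2)) := by
    have := fderiv_fderiv_apply_add_fderiv_apply_eq_zero_of_comp_eventuallyEq_zero (hγ0 ▸ hρ)
      (Eventually.of_forall hγ) hγ' hγ_zero
    simp only [hγ0, γ', mul_zero, zero_smul, add_zero, map_smul, smul_eq_mul] at this
    linarith
  have hgrad : ‖gradient ρ p‖ = |D (e 2)| := by
    rw [EuclideanSpace.norm_eq, Fin.sum_univ_three]
    simp only [gradient_apply_eq_fderiv_single, Real.norm_eq_abs, sq_abs]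
    change √(D (e 0) ^ 2 + D (e 1) ^ 2 + D (e 2) ^ 2) = _
    simp [hD0, hD1, Real.sqrt_sq_eq_abs]
  calc 2 * |a| * ‖gradient ρ p‖ = ‖fderiv ℝ (fderiv ℝ ρ) p (e 1) (e 1)‖ := by
        rw [hgrad, hD2, norm_neg, Real.norm_eq_abs, abs_mul, abs_mul, abs_two]
    _ ≤ ‖iteratedFDeriv ℝ 2 ρ p‖ * ‖e 1‖ * ‖e 1‖ := norm_fderiv_fderiv_apply_le ρ p (e 1) (e 1)
    _ = ‖iteratedFDeriv ℝ 2 ρ p‖ := by simp [e]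

/-- The domain `Ω = {(x,y,z) : z < x y²} ⊆ ℝ³` admits no uniformly `C²` defining function. -/
theorem stmt0 :
    ¬ ∃ (U : Set (EuclideanSpace ℝ (Fin 3))) (ρ : EuclideanSpace ℝ (Fin 3) → ℝ) (C₁ C₂ : ℝ),
      IsOpen U ∧
      frontier {p : EuclideanSpace ℝ (Fin 3) | p 2 < p 0 * (p 1) ^ 2} ⊆ U ∧
      0 < C₁ ∧ 0 < C₂ ∧
      ContDiffOn ℝ 2 ρ U ∧
      {p : EuclideanSpace ℝ (Fin 3) | p 2 < p 0 * (p 1) ^ 2} ∩ U = {p | ρ p < 0} ∩ U ∧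
      (∀ x ∈ U, C₁ < ‖gradient ρ x‖) ∧
      (∀ x ∈ U, ∀ i : ℕ, i ≤ 2 → ‖iteratedFDeriv ℝ i ρ x‖ < C₂) := by
  rintro ⟨U, ρ, C₁, C₂, hU, hfr, hC₁, hC₂, hρ, hset, hgrad, hder⟩
  have hgraph_sub : ∀ p : EuclideanSpace ℝ (Fin 3), p 2 = p 0 * p 1 ^ 2 → p ∈ U :=
    fun p hp => hfr (mem_frontier_setOf_lt_mul_sq hp)
  have hzero : ∀ p : EuclideanSpace ℝ (Fin 3), p 2 = p 0 * p 1 ^ 2 → ρ p = 0 := fun p hp =>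
    eq_zero_of_mem_frontier_of_inter_eq hU hρ.continuousOn hset
      (mem_frontier_setOf_lt_mul_sq hp) (hgraph_sub p hp)
  set a := C₂ / C₁
  set p : EuclideanSpace ℝ (Fin 3) := a • EuclideanSpace.single 0 1
  have hpU : p ∈ U := hgraph_sub p (by simp [p])
  have hkey := two_mul_abs_mul_norm_gradient_le_of_eq_zero_on_graph a
    (hρ.contDiffAt (hU.mem_nhds hpU)) hzero
  have ha : 2 * |a| * C₁ = 2 * C₂ := by
    rw [abs_of_pos (div_pos hC₂ hC₁)]
    field_simp
  have := mul_lt_mul_of_pos_left (hgrad p hpU) (by positivity : 0 < 2 * |a|)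
  linarith [hder p hpU 2 le_rfl]
end

section
/- Let f : U → ℝ be C^{k+1} on an open set U ⊂ ℝⁿ with |∇f|² ≡ 1 on U. Let p ∈ U with ∇f(p) = (0,…,0,1). Then for any multi-index I of length k (1 ≤ k), the derivative ∂/∂y_n (∂^k f/∂y_I)(p) equals −(1/2) ∑_{j=1}^n ∑_{∅ ≠ J ⊊ I} ∂/∂y_j(∂^{|J|}f/∂y_J)(p) · ∂/∂y_j(∂^{k−|J|}f/∂y_{I∖J})(p), where the sum over J is over subsets of the multi-index I counted with multiplicity as in the Leibniz rule. -/
/-!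
Write `g_j = ∂f/∂y_j`. Differentiating `∑_j g_j² = 1` along the multi-index `I` and expanding
each square by the Leibniz rule gives `∑_j ∑_{J ⊆ I} ∂_J g_j(p) · ∂_{I∖J} g_j(p) = 0`. Because
`g_j(p) = δ_{jn}`, the terms `J = ∅` and `J = I` each contribute `∂_I g_n(p)`, which equals
`∂/∂y_n (∂^k f/∂y_I)(p)` by the symmetry of mixed partial derivatives.

Mixed partials are handled as iterated directional derivatives `∂_{v₁} ⋯ ∂_{vₘ} u` along a list
of vectors; on an open set where `u` is `C^m` they agree with `iteratedFDeriv`.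
-/

open Finset

variable {E F : Type*} [NormedAddCommGroup E] [NormedSpace ℝ E]
  [NormedAddCommGroup F] [NormedSpace ℝ F]

noncomputable def iterDirDeriv : List E → (E → F) → E → F
  | [], u => u
  | v :: l, u => fun x => fderiv ℝ (iterDirDeriv l u) x v

@[simp]
lemma iterDirDeriv_nil (u : E → F) : iterDirDeriv [] u = u := rfl

lemma iterDirDeriv_cons (v : E) (l : List E) (u : E → F) :
    iterDirDeriv (v :: l) u = fun x => fderiv ℝ (iterDirDeriv l u) x v := rfl

lemma iterDirDeriv_const {l : List E} (hl : l ≠ []) (c : F) :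
    iterDirDeriv l (fun _ : E => c) = 0 := by
  induction l with
  | nil => exact absurd rfl hl
  | cons v l ih =>
    rcases eq_or_ne l [] with rfl | hl'
    · funext x; simp [iterDirDeriv_cons]
    · funext x; simp [iterDirDeriv_cons, ih hl']

lemma iterDirDeriv_pair_comm {g : E → F} {x : E} (hg : ContDiffAt ℝ 2 g x) (v w : E) :
    iterDirDeriv [v, w] g x = iterDirDeriv [w, v] g x := by
  have hdf : DifferentiableAt ℝ (fderiv ℝ g) x :=
    (hg.fderiv_right (m := 1) le_rfl).differentiableAt one_ne_zero
  simp only [iterDirDeriv_cons, iterDirDeriv_nil]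
  rw [fderiv_clm_apply hdf (differentiableAt_const _),
    fderiv_clm_apply hdf (differentiableAt_const _)]
  simpa using (hg.isSymmSndFDerivAt (by simp)) v w

section OpenSet

variable {U : Set E} (hU : IsOpen U)
include hU

lemma iterDirDeriv_congr (l : List E) {u w : E → F} (h : Set.EqOn u w U) :
    Set.EqOn (iterDirDeriv l u) (iterDirDeriv l w) U := by
  induction l with
  | nil => exact h
  | cons v l ih =>
    intro x hx
    simp only [iterDirDeriv_cons]
    rw [(ih.eventuallyEq_of_mem (hU.mem_nhds hx)).fderiv_eq]

lemma contDiffOn_iterDirDeriv {l : List E} {u : E → F} {m n : ℕ} (hu : ContDiffOn ℝ n u U)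
    (h : l.length + m ≤ n) : ContDiffOn ℝ m (iterDirDeriv l u) U := by
  induction l generalizing m with
  | nil => exact hu.of_le (by exact_mod_cast (by simpa using h))
  | cons v l ih =>
    have hD := (ih (m := m + 1) (by rw [List.length_cons] at h; omega)).fderiv_of_isOpen hU
      (by push_cast; rfl)
    exact (ContinuousLinearMap.apply ℝ F v).contDiff.comp_contDiffOn hD

lemma differentiableAt_iterDirDeriv {l : List E} {u : E → F} {n : ℕ} (hu : ContDiffOn ℝ n u U)
    (h : l.length < n) {x : E} (hx : x ∈ U) : DifferentiableAt ℝ (iterDirDeriv l u) x :=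
  ((contDiffOn_iterDirDeriv hU hu (m := 1) h).differentiableOn one_ne_zero).differentiableAt
    (hU.mem_nhds hx)

lemma iterDirDeriv_sum {ι : Type*} (t : Finset ι) (l : List E) {u : ι → E → F} {n : ℕ}
    (hu : ∀ i ∈ t, ContDiffOn ℝ n (u i) U) (h : l.length ≤ n) :
    Set.EqOn (iterDirDeriv l fun x => ∑ i ∈ t, u i x)
      (fun x => ∑ i ∈ t, iterDirDeriv l (u i) x) U := by
  induction l with
  | nil => intro x _; rfl
  | cons v l ih =>
    intro x hx
    have hl : l.length < n := by simpa using h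
    simp only [iterDirDeriv_cons]
    rw [((ih hl.le).eventuallyEq_of_mem (hU.mem_nhds hx)).fderiv_eq,
      fderiv_fun_sum fun i hi => differentiableAt_iterDirDeriv hU (hu i hi) hl hx,
      _root_.sum_apply]

lemma iterDirDeriv_mul {𝔸 : Type*} [NormedCommRing 𝔸] [NormedAlgebra ℝ 𝔸]
    {α : Type*} [LinearOrder α] (c : α → E) {u w : E → 𝔸} {n : ℕ}
    (hu : ContDiffOn ℝ n u U) (hw : ContDiffOn ℝ n w U) (T : Finset α) (hT : #T ≤ n) :
    Set.EqOn (iterDirDeriv (T.sort.map c) fun x => u x * w x)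
      (fun x => ∑ s ∈ T.powerset,
        iterDirDeriv (s.sort.map c) u x * iterDirDeriv ((T \ s).sort.map c) w x) U := by
  induction T using Finset.induction_on_min with
  | empty => intro x _; simp
  | insert a T ha ih =>
    have haT : a ∉ T := fun h => lt_irrefl a (ha a h)
    have hsort : ∀ s ⊆ T, (insert a s).sort.map c = c a :: s.sort.map c := fun s hs => by
      rw [sort_insert _ (fun b hb => (ha b (hs hb)).le) (fun h => haT (hs h)), List.map_cons]
    rw [card_insert_of_notMem haT] at hT
    intro x hx
    have hd : ∀ s ⊆ T, ∀ g : E → 𝔸, ContDiffOn ℝ n g U →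
        DifferentiableAt ℝ (iterDirDeriv (s.sort.map c) g) x := fun s hs g hg =>
      differentiableAt_iterDirDeriv hU hg
        (by simpa using (Finset.card_le_card hs).trans_lt hT) hx
    simp only [hsort T subset_rfl, iterDirDeriv_cons]
    rw [((ih (by omega)).eventuallyEq_of_mem (hU.mem_nhds hx)).fderiv_eq,
      fderiv_fun_sum fun s hs =>
        (hd s (mem_powerset.1 hs) u hu).fun_mul (hd _ sdiff_subset w hw),
      _root_.sum_apply, sum_powerset_insert haT, add_comm, ← sum_add_distrib]
    refine sum_congr rfl fun s hs => ?_
    rw [mem_powerset] at hs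
    rw [fderiv_fun_mul (hd s hs u hu) (hd (T \ s) sdiff_subset w hw),
      insert_sdiff_of_notMem _ (fun h => haT (hs h)), insert_sdiff_insert,
      sdiff_insert_of_notMem haT, hsort s hs, hsort (T \ s) sdiff_subset]
    simp only [add_apply, smul_apply, smul_eq_mul, iterDirDeriv_cons]
    ring

lemma iterDirDeriv_cons_eqOn {l : List E} {u : E → F} {n : ℕ} (hu : ContDiffOn ℝ n u U)
    (h : l.length < n) (v : E) :
    Set.EqOn (iterDirDeriv (v :: l) u) (iterDirDeriv l (iterDirDeriv [v] u)) U := by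
  induction l with
  | nil => intro x _; rfl
  | cons a l ih =>
    intro x hx
    have hl : l.length + 2 ≤ n := by rw [List.length_cons] at h; omega
    calc iterDirDeriv (v :: a :: l) u x = iterDirDeriv [v, a] (iterDirDeriv l u) x := rfl
      _ = iterDirDeriv [a, v] (iterDirDeriv l u) x :=
        iterDirDeriv_pair_comm
          ((contDiffOn_iterDirDeriv hU hu hl).contDiffAt (hU.mem_nhds hx)) v a
      _ = iterDirDeriv [a] (iterDirDeriv (v :: l) u) x := rfl
      _ = iterDirDeriv [a] (iterDirDeriv l (iterDirDeriv [v] u)) x :=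
        iterDirDeriv_congr hU [a] (ih (by rw [List.length_cons] at h; omega)) hx

lemma iteratedFDeriv_eq_iterDirDeriv {m : ℕ} {u : E → F} (hu : ContDiffOn ℝ m u U) {x : E}
    (hx : x ∈ U) (v : Fin m → E) :
    iteratedFDeriv ℝ m u x v = iterDirDeriv (List.ofFn v) u x := by
  induction m generalizing x with
  | zero => simp
  | succ m ih =>
    have hdiff : DifferentiableAt ℝ (iteratedFDeriv ℝ m u) x :=
      (hu.contDiffAt (hU.mem_nhds hx)).differentiableAt_iteratedFDeriv
        (by exact_mod_cast m.lt_succ_self)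
    have hcongr : Set.EqOn (fun y => iteratedFDeriv ℝ m u y (Fin.tail v))
        (iterDirDeriv (List.ofFn (Fin.tail v)) u) U :=
      fun y hy => ih (hu.of_le (by exact_mod_cast m.le_succ)) hy _
    rw [iteratedFDeriv_succ_apply_left, ← fderiv_continuousMultilinear_apply_const_apply hdiff,
      (hcongr.eventuallyEq_of_mem (hU.mem_nhds hx)).fderiv_eq, List.ofFn_succ]
    rfl

lemma iteratedFDeriv_cons_eq_iterDirDeriv {m n : ℕ} {u : E → F} (hu : ContDiffOn ℝ n u U)
    (hm : m < n) {x : E} (hx : x ∈ U) (w : E) (v : Fin m → E) :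
    iteratedFDeriv ℝ (m + 1) u x (Fin.cons w v) =
      iterDirDeriv (List.ofFn v) (iterDirDeriv [w] u) x := by
  rw [iteratedFDeriv_eq_iterDirDeriv hU (hu.of_le (by exact_mod_cast hm)) hx, List.ofFn_succ]
  simp only [Fin.cons_zero, Fin.cons_succ]
  exact iterDirDeriv_cons_eqOn hU hu (by simpa using hm) w hx

lemma sum_sum_iterDirDeriv_mul_compl_eq_zero {ι α : Type*} [Fintype ι] [Fintype α]
    [LinearOrder α] [Nonempty α] {g : ι → E → ℝ} {n : ℕ} (hg : ∀ j, ContDiffOn ℝ n (g j) U)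
    {r : ℝ} (hsq : Set.EqOn (fun x => ∑ j, g j x ^ 2) (fun _ => r) U) (c : α → E)
    (hα : Fintype.card α ≤ n) {x : E} (hx : x ∈ U) :
    ∑ j, ∑ s : Finset α,
      iterDirDeriv (s.sort.map c) (g j) x * iterDirDeriv (sᶜ.sort.map c) (g j) x = 0 := by
  have hne : (univ : Finset α).sort.map c ≠ [] :=
    List.ne_nil_of_length_pos (by simp [Fintype.card_pos])
  calc _ = ∑ j, iterDirDeriv ((univ : Finset α).sort.map c) (fun y => g j y * g j y) x := by
        refine sum_congr rfl fun j _ => ?_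
        rw [iterDirDeriv_mul hU c (hg j) (hg j) univ (by simpa) hx, powerset_univ]
        simp only [compl_eq_univ_sdiff]
    _ = iterDirDeriv ((univ : Finset α).sort.map c) (fun y => ∑ j, g j y ^ 2) x := by
        simp only [sq]
        exact (iterDirDeriv_sum hU univ _ (fun j _ => (hg j).mul (hg j)) (by simpa)).symm hx
    _ = 0 := by rw [iterDirDeriv_congr hU _ hsq hx, iterDirDeriv_const hne]; rfl

end OpenSet

lemma Finset.ofFn_comp_orderIsoOfFin {α β : Type*} [LinearOrder α] (s : Finset α) (g : α → β) :
    List.ofFn (fun i => g (s.orderIsoOfFin rfl i)) = s.sort.map g := by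
  rw [List.ofFn_eq_map, ← listMap_orderEmbOfFin_finRange s rfl, List.map_map]
  rfl

lemma Finset.sum_finset_eq_empty_add_univ_add {α M : Type*} [Fintype α] [Nonempty α]
    [DecidableEq α] [AddCommMonoid M] (G : Finset α → M) :
    ∑ s, G s = G ∅ + G univ + ∑ s, if s.Nonempty ∧ s ≠ univ then G s else 0 := by
  rw [← sum_filter, ← sum_filter_add_sum_filter_not univ (fun s => s.Nonempty ∧ s ≠ univ),
    add_comm]
  congr 1
  have : univ.filter (fun s : Finset α => ¬(s.Nonempty ∧ s ≠ univ)) = {∅, univ} := by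
    ext s
    simp only [mem_filter, mem_univ, true_and, mem_insert, mem_singleton, not_and_or, not_not,
      not_nonempty_iff_eq_empty]
  rw [this, sum_pair univ_nonempty.ne_empty.symm]

/-- Differentiating `|∇f|² ≡ 1` a total of `k` times at a point where `∇f = eₙ`:
the `(k+1)`-st derivative `∂/∂yₙ ∂^k f/∂y_I` equals `−(1/2)` times the sum of products of
lower-order derivatives coming from the Leibniz rule (terms `∅ ≠ J ⊊ I`). -/
theorem stmt3 (n k : ℕ) (hn : 0 < n) (hk : 1 ≤ k)
    (U : Set (EuclideanSpace ℝ (Fin n))) (hU : IsOpen U)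
    (f : EuclideanSpace ℝ (Fin n) → ℝ)
    (hf : ContDiffOn ℝ (k + 1) f U)
    (hgrad : ∀ x ∈ U, ∑ j : Fin n, (fderiv ℝ f x (EuclideanSpace.single j 1)) ^ 2 = 1)
    (p : EuclideanSpace ℝ (Fin n)) (hp : p ∈ U)
    (hgp : ∀ j : Fin n,
      fderiv ℝ f p (EuclideanSpace.single j 1) = if j = (⟨n - 1, by omega⟩ : Fin n) then 1 else 0)
    (I : Fin k → Fin n) :
    iteratedFDeriv ℝ (k + 1) f p
        (Fin.cons (EuclideanSpace.single (⟨n - 1, by omega⟩ : Fin n) 1)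
          fun i => EuclideanSpace.single (I i) 1) =
      -(1 / 2) * ∑ j : Fin n, ∑ s : Finset (Fin k),
        if s.Nonempty ∧ s ≠ Finset.univ then
          (iteratedFDeriv ℝ (s.card + 1) f p
              (Fin.cons (EuclideanSpace.single j 1)
                fun i => EuclideanSpace.single (I ((s.orderIsoOfFin rfl i).val)) 1)) *
          (iteratedFDeriv ℝ (sᶜ.card + 1) f p
              (Fin.cons (EuclideanSpace.single j 1)
                fun i => EuclideanSpace.single (I ((sᶜ.orderIsoOfFin rfl i).val)) 1))
        else 0 := by
  have : Nonempty (Fin k) := ⟨⟨0, hk⟩⟩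
  set N : Fin n := ⟨n - 1, by omega⟩
  set e : Fin n → EuclideanSpace ℝ (Fin n) := fun j => EuclideanSpace.single j 1
  replace hf : ContDiffOn ℝ (k + 1 : ℕ) f U := by exact_mod_cast hf
  set L : Finset (Fin k) → List (EuclideanSpace ℝ (Fin n)) := fun s => s.sort.map (e ∘ I)
  set g : Fin n → EuclideanSpace ℝ (Fin n) → ℝ := fun j => iterDirDeriv [e j] f
  have hterm : ∀ j (s : Finset (Fin k)), iteratedFDeriv ℝ (#s + 1) f p
      (Fin.cons (EuclideanSpace.single j 1)
        fun i => EuclideanSpace.single (I (s.orderIsoOfFin rfl i)) 1) =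
      iterDirDeriv (L s) (g j) p := by
    intro j s
    have hs : #s < k + 1 := Nat.lt_succ_of_le (card_le_univ s |>.trans_eq (Fintype.card_fin k))
    rw [iteratedFDeriv_cons_eq_iterDirDeriv hU hf hs hp]
    exact congrArg (iterDirDeriv · (g j) p) (ofFn_comp_orderIsoOfFin s (e ∘ I))
  have hlhs : iteratedFDeriv ℝ (k + 1) f p
      (Fin.cons (EuclideanSpace.single N 1) fun i => EuclideanSpace.single (I i) 1) =
      iterDirDeriv (L univ) (g N) p := by
    rw [iteratedFDeriv_cons_eq_iterDirDeriv hU hf k.lt_succ_self hp, List.ofFn_eq_map]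
    simp only [L, Fin.sort_univ]
    rfl
  have hzero := sum_sum_iterDirDeriv_mul_compl_eq_zero hU (g := g)
    (fun j => contDiffOn_iterDirDeriv hU hf (by rw [List.length_singleton, add_comm]))
    (fun x hx => hgrad x hx) (e ∘ I) (Fintype.card_fin k).le hp
  have hg_at_p : ∀ j, g j p = if j = N then 1 else 0 := hgp
  rw [hlhs]
  simp only [hterm]
  rw [sum_congr rfl fun j _ => sum_finset_eq_empty_add_univ_add _] at hzero
  simp only [compl_empty, compl_univ, sort_empty, List.map_nil, iterDirDeriv_nil, hg_at_p, ite_mul,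
    mul_ite, one_mul, mul_one, zero_mul, mul_zero, sum_add_distrib, sum_ite_eq', mem_univ,
    if_true] at hzero
  linarith
end

section
/- For the defining function ρ₂(x,y) = y − sin(x²)/x² (x ≠ 0), ρ₂(0,y) = y − 1, of Ω₂ = {y < sin(x²)/x²} ⊂ ℝ², one has: (a) ∂²ρ₂/∂x² = 4 sin(x²) + O(x^{-2}) as |x| → ∞, hence sup |∂²ρ₂/∂x²| < ∞; (b) ∂³ρ₂/∂x³ = 8x cos(x²) + O(x^{-1}), hence sup |∂³ρ₂/∂x³| = ∞. -/
open Classical in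
/-- `sin(x²)/x²`, extended analytically by `1` at `x = 0`. -/
noncomputable def g2 : ℝ → ℝ := fun x => if x = 0 then 1 else Real.sin (x ^ 2) / x ^ 2

open Complex in
lemma analyticAt_csin' (z : ℂ) : AnalyticAt ℂ Complex.sin z := by
  have h : Complex.sin = fun z => ((Complex.exp (-z * I) - Complex.exp (z * I)) * I) / 2 := by
    funext z; rw [Complex.sin]
  rw [h]
  exact (((analyticAt_cexp.comp ((analyticAt_id.neg).mul analyticAt_const)).sub
    (analyticAt_cexp.comp (analyticAt_id.mul analyticAt_const))).mul analyticAt_const).div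
    analyticAt_const two_ne_zero

lemma analyticAt_rsin' (x : ℝ) : AnalyticAt ℝ Real.sin x := by
  have h : Real.sin = fun x : ℝ => Complex.reCLM (Complex.sin (Complex.ofRealCLM x)) := by
    funext x; simp [Real.sin]
  rw [h]
  exact (Complex.reCLM.analyticAt _).comp
    (((analyticAt_csin' _).restrictScalars).comp (Complex.ofRealCLM.analyticAt _))

lemma analyticAt_hh (t : ℝ) : AnalyticAt ℝ (dslope Real.sin 0) t := by
  rcases eq_or_ne t 0 with rfl | ht
  · obtain ⟨p, hp⟩ := analyticAt_rsin' 0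
    exact ⟨p.fslope, hp.has_fpower_series_dslope_fslope⟩
  · have he : (fun y : ℝ => Real.sin y / y) =ᶠ[nhds t] dslope Real.sin 0 := by
      filter_upwards [eventually_ne_nhds ht] with y hy
      simp [dslope, Function.update_of_ne hy, slope, Real.sin_zero, div_eq_inv_mul]
    exact (((analyticAt_rsin' t).div analyticAt_id ht)).congr he

lemma g2_eq' : g2 = fun x => dslope Real.sin 0 (x ^ 2) := by
  funext x
  rcases eq_or_ne x 0 with rfl | hx
  · have h0 : (0:ℝ)^2 = 0 := by norm_num
    rw [h0]
    simp [g2, dslope, Real.deriv_sin]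
  · have h2 : x ^ 2 ≠ 0 := pow_ne_zero _ hx
    simp [g2, hx, dslope, Function.update_of_ne h2, slope, Real.sin_zero, div_eq_inv_mul]

lemma contDiff_g2' : ContDiff ℝ (⊤ : ℕ∞) g2 := by
  rw [g2_eq']
  have h : ContDiff ℝ (⊤ : ℕ∞) (dslope Real.sin 0) :=
    contDiff_iff_contDiffAt.2 fun t => (analyticAt_hh t).contDiffAt
  exact h.comp (contDiff_id.pow 2)

lemma hsin2 (x : ℝ) : HasDerivAt (fun y : ℝ => Real.sin (y ^ 2)) (Real.cos (x ^ 2) * (2 * x)) x := by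
  have := (Real.hasDerivAt_sin (x ^ 2)).comp x (hasDerivAt_pow 2 x)
  simpa [Function.comp_def] using this

lemma hcos2 (x : ℝ) : HasDerivAt (fun y : ℝ => Real.cos (y ^ 2)) (-Real.sin (x ^ 2) * (2 * x)) x := by
  have := (Real.hasDerivAt_cos (x ^ 2)).comp x (hasDerivAt_pow 2 x)
  simpa [Function.comp_def] using this

lemma hd0 {x : ℝ} (hx : x ≠ 0) :
    HasDerivAt (fun y : ℝ => -g2 y)
      (2 * Real.sin (x ^ 2) / x ^ 3 - 2 * Real.cos (x ^ 2) / x) x := by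
  have h2 : (x : ℝ) ^ 2 ≠ 0 := pow_ne_zero _ hx
  have h : HasDerivAt (fun y : ℝ => -(Real.sin (y ^ 2) / y ^ 2))
      (2 * Real.sin (x ^ 2) / x ^ 3 - 2 * Real.cos (x ^ 2) / x) x := by
    have := ((hsin2 x).div (hasDerivAt_pow 2 x) h2).neg
    refine this.congr_deriv ?_
    field_simp
    ring
  apply h.congr_of_eventuallyEq
  filter_upwards [eventually_ne_nhds hx] with y hy
  simp [g2, hy]

lemma hd1 {x : ℝ} (hx : x ≠ 0) :
    HasDerivAt (fun y : ℝ => 2 * Real.sin (y ^ 2) / y ^ 3 - 2 * Real.cos (y ^ 2) / y)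
      (4 * Real.sin (x ^ 2) + 6 * Real.cos (x ^ 2) / x ^ 2 - 6 * Real.sin (x ^ 2) / x ^ 4) x := by
  have h3 : (x : ℝ) ^ 3 ≠ 0 := pow_ne_zero _ hx
  have := (((hsin2 x).const_mul 2).div (hasDerivAt_pow 3 x) h3).sub
    (((hcos2 x).const_mul 2).div (hasDerivAt_id x) hx)
  refine this.congr_deriv ?_
  simp only [id_eq]
  field_simp
  ring

lemma hd2 {x : ℝ} (hx : x ≠ 0) :
    HasDerivAt (fun y : ℝ =>
        4 * Real.sin (y ^ 2) + 6 * Real.cos (y ^ 2) / y ^ 2 - 6 * Real.sin (y ^ 2) / y ^ 4)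
      (8 * x * Real.cos (x ^ 2) - 12 * Real.sin (x ^ 2) / x - 24 * Real.cos (x ^ 2) / x ^ 3
        + 24 * Real.sin (x ^ 2) / x ^ 5) x := by
  have h2 : (x : ℝ) ^ 2 ≠ 0 := pow_ne_zero _ hx
  have h4 : (x : ℝ) ^ 4 ≠ 0 := pow_ne_zero _ hx
  have := (((hsin2 x).const_mul 4).add
      (((hcos2 x).const_mul 6).div (hasDerivAt_pow 2 x) h2)).sub
    (((hsin2 x).const_mul 6).div (hasDerivAt_pow 4 x) h4)
  refine this.congr_deriv ?_
  field_simp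
  ring

lemma dg2' {x : ℝ} (hx : x ≠ 0) :
    deriv (deriv fun y : ℝ => -g2 y) x =
      4 * Real.sin (x ^ 2) + 6 * Real.cos (x ^ 2) / x ^ 2 - 6 * Real.sin (x ^ 2) / x ^ 4 := by
  have he : deriv (fun y : ℝ => -g2 y) =ᶠ[nhds x]
      (fun y => 2 * Real.sin (y ^ 2) / y ^ 3 - 2 * Real.cos (y ^ 2) / y) := by
    filter_upwards [eventually_ne_nhds hx] with y hy using (hd0 hy).deriv
  rw [he.deriv_eq]
  exact (hd1 hx).deriv

lemma dg3' {x : ℝ} (hx : x ≠ 0) :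
    deriv (deriv (deriv fun y : ℝ => -g2 y)) x =
      8 * x * Real.cos (x ^ 2) - 12 * Real.sin (x ^ 2) / x - 24 * Real.cos (x ^ 2) / x ^ 3
        + 24 * Real.sin (x ^ 2) / x ^ 5 := by
  have he : deriv (deriv fun y : ℝ => -g2 y) =ᶠ[nhds x]
      (fun y => 4 * Real.sin (y ^ 2) + 6 * Real.cos (y ^ 2) / y ^ 2 - 6 * Real.sin (y ^ 2) / y ^ 4) := by
    filter_upwards [eventually_ne_nhds hx] with y hy using dg2' hy
  rw [he.deriv_eq]
  exact (hd2 hx).deriv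

lemma boundA {x : ℝ} (hx : 1 ≤ |x|) :
    |deriv (deriv fun y : ℝ => -g2 y) x - 4 * Real.sin (x ^ 2)| ≤ 12 / x ^ 2 := by
  have hx0 : x ≠ 0 := by intro h; rw [h] at hx; simp at hx; linarith
  have hx2 : (1 : ℝ) ≤ x ^ 2 := by nlinarith [sq_abs x]
  have hx2p : (0 : ℝ) < x ^ 2 := by linarith
  have hx4 : x ^ 2 ≤ x ^ 4 := by nlinarith
  rw [dg2' hx0]
  have hs : |Real.sin (x ^ 2)| ≤ 1 := Real.abs_sin_le_one _
  have hc : |Real.cos (x ^ 2)| ≤ 1 := Real.abs_cos_le_one _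
  have hx4p : (0 : ℝ) < x ^ 4 := by linarith
  have e1 : |6 * Real.cos (x ^ 2) / x ^ 2| ≤ 6 / x ^ 2 := by
    calc |6 * Real.cos (x ^ 2) / x ^ 2| = 6 * |Real.cos (x ^ 2)| / x ^ 2 := by
          rw [abs_div, abs_mul, abs_of_pos hx2p]; norm_num
      _ ≤ 6 * 1 / x ^ 2 := by gcongr
      _ = 6 / x ^ 2 := by norm_num
  have e2 : |6 * Real.sin (x ^ 2) / x ^ 4| ≤ 6 / x ^ 2 := by
    calc |6 * Real.sin (x ^ 2) / x ^ 4| = 6 * |Real.sin (x ^ 2)| / x ^ 4 := by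
          rw [abs_div, abs_mul, abs_of_pos hx4p]; norm_num
      _ ≤ 6 * 1 / x ^ 4 := by gcongr
      _ = 6 / x ^ 4 := by norm_num
      _ ≤ 6 / x ^ 2 := by gcongr
  calc |4 * Real.sin (x ^ 2) + 6 * Real.cos (x ^ 2) / x ^ 2 - 6 * Real.sin (x ^ 2) / x ^ 4
        - 4 * Real.sin (x ^ 2)|
      = |6 * Real.cos (x ^ 2) / x ^ 2 - 6 * Real.sin (x ^ 2) / x ^ 4| := by ring_nf
    _ ≤ |6 * Real.cos (x ^ 2) / x ^ 2| + |6 * Real.sin (x ^ 2) / x ^ 4| := abs_sub _ _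
    _ ≤ 6 / x ^ 2 + 6 / x ^ 2 := add_le_add e1 e2
    _ = 12 / x ^ 2 := by ring

lemma boundB {x : ℝ} (hx : 1 ≤ |x|) :
    |deriv (deriv (deriv fun y : ℝ => -g2 y)) x - 8 * x * Real.cos (x ^ 2)| ≤ 60 / |x| := by
  have hx0 : x ≠ 0 := by intro h; rw [h] at hx; simp at hx; linarith
  have hxp : (0 : ℝ) < |x| := by linarith
  have hx3 : |x| ≤ |x| ^ 3 := le_self_pow₀ hx (by norm_num)
  have hx5 : |x| ≤ |x| ^ 5 := le_self_pow₀ hx (by norm_num)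
  have hx3p : (0 : ℝ) < |x| ^ 3 := by positivity
  have hx5p : (0 : ℝ) < |x| ^ 5 := by positivity
  rw [dg3' hx0]
  have hs : |Real.sin (x ^ 2)| ≤ 1 := Real.abs_sin_le_one _
  have hc : |Real.cos (x ^ 2)| ≤ 1 := Real.abs_cos_le_one _
  have e1 : |12 * Real.sin (x ^ 2) / x| ≤ 12 / |x| := by
    calc |12 * Real.sin (x ^ 2) / x| = 12 * |Real.sin (x ^ 2)| / |x| := by
          rw [abs_div, abs_mul]; norm_num
      _ ≤ 12 * 1 / |x| := by gcongr
      _ = 12 / |x| := by norm_num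
  have e2 : |24 * Real.cos (x ^ 2) / x ^ 3| ≤ 24 / |x| := by
    calc |24 * Real.cos (x ^ 2) / x ^ 3| = 24 * |Real.cos (x ^ 2)| / |x| ^ 3 := by
          rw [abs_div, abs_mul, abs_pow]; norm_num
      _ ≤ 24 * 1 / |x| ^ 3 := by gcongr
      _ = 24 / |x| ^ 3 := by norm_num
      _ ≤ 24 / |x| := by gcongr
  have e3 : |24 * Real.sin (x ^ 2) / x ^ 5| ≤ 24 / |x| := by
    calc |24 * Real.sin (x ^ 2) / x ^ 5| = 24 * |Real.sin (x ^ 2)| / |x| ^ 5 := by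
          rw [abs_div, abs_mul, abs_pow]; norm_num
      _ ≤ 24 * 1 / |x| ^ 5 := by gcongr
      _ = 24 / |x| ^ 5 := by norm_num
      _ ≤ 24 / |x| := by gcongr
  calc |8 * x * Real.cos (x ^ 2) - 12 * Real.sin (x ^ 2) / x - 24 * Real.cos (x ^ 2) / x ^ 3
        + 24 * Real.sin (x ^ 2) / x ^ 5 - 8 * x * Real.cos (x ^ 2)|
      = |(-(12 * Real.sin (x ^ 2) / x) - 24 * Real.cos (x ^ 2) / x ^ 3)
          + 24 * Real.sin (x ^ 2) / x ^ 5| := by ring_nf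
    _ ≤ |(-(12 * Real.sin (x ^ 2) / x) - 24 * Real.cos (x ^ 2) / x ^ 3)|
          + |24 * Real.sin (x ^ 2) / x ^ 5| := abs_add_le _ _
    _ ≤ (|(-(12 * Real.sin (x ^ 2) / x))| + |24 * Real.cos (x ^ 2) / x ^ 3|)
          + |24 * Real.sin (x ^ 2) / x ^ 5| := by
          exact add_le_add_left (abs_sub _ _) _
    _ = |12 * Real.sin (x ^ 2) / x| + |24 * Real.cos (x ^ 2) / x ^ 3|
          + |24 * Real.sin (x ^ 2) / x ^ 5| := by rw [abs_neg]
    _ ≤ 12 / |x| + 24 / |x| + 24 / |x| := add_le_add (add_le_add e1 e2) e3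
    _ = 60 / |x| := by ring

/-- For `ρ₂(x,y) = y − sin(x²)/x²`, the pure `x`-derivatives (`∂^m ρ₂/∂x^m` is the `m`-th
derivative of `x ↦ −g2 x`) satisfy: `∂²ρ₂/∂x² = 4 sin(x²) + O(x⁻²)`, hence uniformly
bounded, while `∂³ρ₂/∂x³ = 8x cos(x²) + O(x⁻¹)`, hence unbounded. -/
theorem stmt15 :
    (∃ C : ℝ, ∀ x : ℝ, 1 ≤ |x| →
      |deriv (deriv fun x : ℝ => -g2 x) x - 4 * Real.sin (x ^ 2)| ≤ C / x ^ 2) ∧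
    (∃ M : ℝ, ∀ x : ℝ, |deriv (deriv fun x : ℝ => -g2 x) x| ≤ M) ∧
    (∃ C : ℝ, ∀ x : ℝ, 1 ≤ |x| →
      |deriv (deriv (deriv fun x : ℝ => -g2 x)) x - 8 * x * Real.cos (x ^ 2)| ≤ C / |x|) ∧
    ¬ (∃ M : ℝ, ∀ x : ℝ, |deriv (deriv (deriv fun x : ℝ => -g2 x)) x| ≤ M) := by
  have hcont : Continuous (deriv (deriv fun y : ℝ => -g2 y)) := by
    have hg : ContDiff ℝ ((⊤ : ℕ∞) : WithTop ℕ∞) (fun y : ℝ => -g2 y) :=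
      contDiff_g2'.neg.of_le (mod_cast le_top)
    have h1 := (contDiff_infty_iff_deriv.mp hg).2
    have h2 := (contDiff_infty_iff_deriv.mp h1).2
    exact h2.continuous
  refine ⟨⟨12, fun x hx => boundA hx⟩, ?_, ⟨60, fun x hx => boundB hx⟩, ?_⟩
  · -- bounded second derivative
    obtain ⟨x₀, -, hx₀⟩ := isCompact_Icc.exists_isMaxOn (α := ℝ)
      (⟨0, by norm_num⟩ : (Set.Icc (-1:ℝ) 1).Nonempty) (hcont.abs.continuousOn)
    refine ⟨max |deriv (deriv fun y : ℝ => -g2 y) x₀| 16, fun x => ?_⟩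
    rcases le_or_gt |x| 1 with h | h
    · have hmem : x ∈ Set.Icc (-1:ℝ) 1 := by
        rcases abs_le.mp h with ⟨h1, h2⟩; exact ⟨h1, h2⟩
      exact le_trans (hx₀ hmem) (le_max_left _ _)
    · have h1 : (1:ℝ) ≤ |x| := le_of_lt h
      have hx2 : (1 : ℝ) ≤ x ^ 2 := by nlinarith [sq_abs x]
      have hb := boundA h1
      have hs : |4 * Real.sin (x ^ 2)| ≤ 4 := by
        have h4 := Real.abs_sin_le_one (x ^ 2)
        have h4n := abs_nonneg (Real.sin (x ^ 2))
        rw [abs_mul, abs_of_pos (by norm_num : (0:ℝ) < 4)]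
        nlinarith
      have h12 : 12 / x ^ 2 ≤ 12 := by
        calc 12 / x ^ 2 ≤ 12 / 1 := by gcongr
          _ = 12 := by norm_num
      have : |deriv (deriv fun y : ℝ => -g2 y) x| ≤ 16 := by
        calc |deriv (deriv fun y : ℝ => -g2 y) x|
            = |(deriv (deriv fun y : ℝ => -g2 y) x - 4 * Real.sin (x ^ 2))
                + 4 * Real.sin (x ^ 2)| := by ring_nf
          _ ≤ |deriv (deriv fun y : ℝ => -g2 y) x - 4 * Real.sin (x ^ 2)|
                + |4 * Real.sin (x ^ 2)| := abs_add_le _ _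
          _ ≤ 12 / x ^ 2 + 4 := add_le_add hb hs
          _ ≤ 16 := by linarith
      exact le_trans this (le_max_right _ _)
  · -- third derivative unbounded
    rintro ⟨M, hM⟩
    set t : ℝ := max 1 ((M + 60) / 8 + 1) with ht
    have ht1 : (1:ℝ) ≤ t := le_max_left _ _
    have ht2 : (M + 60) / 8 + 1 ≤ t := le_max_right _ _
    have hπ : (0:ℝ) < 2 * Real.pi := by positivity
    set n : ℕ := ⌈t ^ 2 / (2 * Real.pi)⌉₊ with hn
    have hna : t ^ 2 / (2 * Real.pi) ≤ (n : ℝ) := Nat.le_ceil _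
    have ha : t ^ 2 ≤ (n : ℝ) * (2 * Real.pi) := by
      rw [div_le_iff₀ hπ] at hna
      linarith
    set a : ℝ := (n : ℝ) * (2 * Real.pi) with haa
    have hapos : (0:ℝ) ≤ a := le_trans (by positivity) ha
    set x : ℝ := Real.sqrt a with hxx
    have hx2 : x ^ 2 = a := Real.sq_sqrt hapos
    have hxt : t ≤ x := by
      have := Real.sqrt_le_sqrt ha
      rwa [Real.sqrt_sq (by linarith : (0:ℝ) ≤ t)] at this
    have hxpos : (0:ℝ) < x := by linarith
    have hxabs : |x| = x := abs_of_pos hxpos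
    have hx1 : (1:ℝ) ≤ |x| := by rw [hxabs]; linarith
    have hcos : Real.cos (x ^ 2) = 1 := by
      rw [hx2, haa]
      exact Real.cos_nat_mul_two_pi n
    have hb := boundB hx1
    rw [hcos] at hb
    have h60 : 60 / |x| ≤ 60 := by
      calc 60 / |x| ≤ 60 / 1 := by gcongr
        _ = 60 := by norm_num
    have hDle := hM x
    -- 8 * x ≤ |D3 x| + 60
    have key : 8 * x ≤ M + 60 := by
      have h1 : |8 * x * 1| - |deriv (deriv (deriv fun y : ℝ => -g2 y)) x| ≤
          |deriv (deriv (deriv fun y : ℝ => -g2 y)) x - 8 * x * 1| := by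
        have := abs_sub_abs_le_abs_sub (8 * x * 1) (deriv (deriv (deriv fun y : ℝ => -g2 y)) x)
        rw [abs_sub_comm] at this
        linarith [this]
      have h2 : |8 * x * 1| = 8 * x := by
        rw [mul_one, abs_mul, abs_of_pos (by norm_num : (0:ℝ) < 8), hxabs]
      linarith [le_trans hb h60]
    linarith
end
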